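/- (Deterministic content of the microscopic Hopf–Cole transform for ASIP(q,k), Section 5 Proposition.) Let q ∈ (0,1), let k > 0 be real, let h : ℤ → ℝ, let C ∈ ℝ, and define Z(x) := C·q^{−2h(x)}. Set η(y) := h(y) − h(y−1), define the ASIP(q,k) rates c⁺_q(a,b) := (1/(2[2k]_q))·q^{a−b+(2k−1)}·[a−k]_q·[b+k]_q and c⁻_q(a,b) := (1/(2[2k]_q))·q^{a−b−(2k−1)}·[a+k]_q·[b−k]_q, set ν := ([4k]_q/(2[2k]_q) − 1)/ln q, and define Ω(x) := (q² − 1)·c⁺_q(η(x), η(x+1)) + (q⁻² − 1)·c⁻_q(η(x), η(x+1)) + ν·ln q. Then for every x ∈ ℤ one has Ω(x)·Z(x) = ½·(Z(x+1) + Z(x−1) − 2Z(x)). -/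

import Mathlib

/-
With `P = q^η(x)` and `Q = q^η(x+1)`, the gauge `Z = C q^(-2h)` satisfies `Z(x+1) = Q⁻² Z(x)` and
`Z(x-1) = P² Z(x)`, so the claim is that `Ω(x) = (P² + Q⁻²)/2 - 1`. The choice of `ν` removes the
constant `[4k]_q / (2[2k]_q)`, and what remains is an identity between rational functions of
`q`, `P`, `Q` and `K = q^k`, in which the `P²Q⁻²` terms of the two rates cancel.
-/
noncomputable def qNum (q n : ℝ) : ℝ := (q ^ n - q ^ (-n)) / (q - q⁻¹)

noncomputable def cPlusASIP (q k a b : ℝ) : ℝ :=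
  (1 / (2 * qNum q (2*k))) * q ^ (a - b + (2*k - 1)) * qNum q (a - k) * qNum q (b + k)

noncomputable def cMinusASIP (q k a b : ℝ) : ℝ :=
  (1 / (2 * qNum q (2*k))) * q ^ (a - b - (2*k - 1)) * qNum q (a + k) * qNum q (b - k)

section
variable {q : ℝ} (hq₀ : 0 < q) (hq₁ : q ≠ 1)
include hq₀ hq₁

lemma rpow_sub_rpow_neg_ne_zero {n : ℝ} (hn : n ≠ 0) : q ^ n - q ^ (-n) ≠ 0 := by
  rw [sub_ne_zero, Ne, Real.rpow_right_inj hq₀ hq₁]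
  contrapose! hn
  linarith

lemma rates_combination {k : ℝ} (hk : k ≠ 0) (a b : ℝ) :
    (q ^ (2:ℝ) - 1) * cPlusASIP q k a b + (q ^ (-2:ℝ) - 1) * cMinusASIP q k a b
      + qNum q (4*k) / (2 * qNum q (2*k)) = (q ^ (2*a) + q ^ (-2*b)) / 2 := by
  have hq := rpow_sub_rpow_neg_ne_zero hq₀ hq₁ one_ne_zero
  have hK := rpow_sub_rpow_neg_ne_zero hq₀ hq₁ (n := k + k) (by contrapose! hk; linarith)
  unfold cPlusASIP cMinusASIP qNum
  rw [show a - b + (2*k - 1) = a - b + (k + k) - 1 by ring,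
      show a - b - (2*k - 1) = a - b - (k + k) + 1 by ring,
      show (4:ℝ)*k = k+k+(k+k) by ring, show (2:ℝ)*k = k+k by ring,
      show 2 * a = a + a by ring, show -2 * b = -(b + b) by ring]
  simp only [Real.rpow_add hq₀, Real.rpow_sub hq₀, Real.rpow_neg hq₀.le, Real.rpow_one,
    Real.rpow_two] at hq hK ⊢
  have hq2 : q ^ 2 - 1 ≠ 0 := by
    contrapose! hq; field_simp; linear_combination hq
  have hK4 : (q ^ k) ^ 4 - 1 ≠ 0 := by
    contrapose! hK; field_simp; linear_combination hK
  field_simp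
  ring

end

lemma eq_rpow_mul_of_forall_eq {q C : ℝ} (hq₀ : 0 < q) {h Z : ℤ → ℝ}
    (hZ : ∀ x, Z x = C * q ^ (-2 * h x)) (x y : ℤ) :
    Z y = q ^ (-2 * (h y - h x)) * Z x := by
  rw [hZ, hZ, ← mul_assoc, mul_comm _ C, mul_assoc, ← Real.rpow_add hq₀]
  ring_nf

/-- Deterministic content of the microscopic Hopf–Cole transform for ASIP(q,k):
`Ω(x)·Z(x) = ½ Δ Z(x)`. -/
theorem stmt12 (q : ℝ) (hq : q ∈ Set.Ioo (0:ℝ) 1) (k : ℝ) (hk : 0 < k)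
    (h : ℤ → ℝ) (C : ℝ)
    (Z : ℤ → ℝ) (hZ : ∀ x, Z x = C * q ^ (-2 * h x))
    (η : ℤ → ℝ) (hη : ∀ y, η y = h y - h (y - 1))
    (ν : ℝ) (hν : ν = (qNum q (4*k) / (2 * qNum q (2*k)) - 1) / Real.log q)
    (Ω : ℤ → ℝ)
    (hΩ : ∀ x, Ω x = (q ^ (2:ℝ) - 1) * cPlusASIP q k (η x) (η (x+1))
        + (q ^ (-2:ℝ) - 1) * cMinusASIP q k (η x) (η (x+1)) + ν * Real.log q) :
    ∀ x : ℤ, Ω x * Z x = (1/2) * (Z (x+1) + Z (x-1) - 2 * Z x) := by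
  intro x
  obtain ⟨hq₀, hq₁⟩ := hq
  have hlog : Real.log q ≠ 0 := (Real.log_neg hq₀ hq₁).ne
  have hΩx : Ω x = (q ^ (2 * η x) + q ^ (-2 * η (x+1))) / 2 - 1 := by
    rw [hΩ, hν, div_mul_cancel₀ _ hlog,
      ← rates_combination hq₀ hq₁.ne hk.ne' (η x) (η (x+1))]
    ring
  have hZsucc : Z (x+1) = q ^ (-2 * η (x+1)) * Z x := by
    rw [eq_rpow_mul_of_forall_eq hq₀ hZ x, hη, add_sub_cancel_right]
  have hZpred : Z (x-1) = q ^ (2 * η x) * Z x := by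
    rw [eq_rpow_mul_of_forall_eq hq₀ hZ x, hη]
    ring_nf
  rw [hΩx, hZsucc, hZpred]
  ring
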